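/- For all y > 0 the constant K₁(y) admits the closed form K₁(y) = [ ( (γ₂(r)²/γ₁(r)²)·(δ'(y) − γ₁(r)δ(y))/(δ'(y) − γ₂(r)δ(y)) )^{γ₁(r)/(γ₁(r) − γ₂(r))} · ( (γ₁(r)/(−γ₂(r)))·δ'(y) + γ₁(r)·δ(y) ) ]^{−1}. Moreover K₁(y) > 0 for all y > 0, K₁'(y) < 0 for all y ∈ (b*_{r+q}, y_u], and K₁(y_u)·δ'(b*_{r+q}) < 1. -/

import Mathlib

open Real Set Filter

noncomputable def gam1 (μ σ ρ : ℝ) : ℝ := Real.sqrt (μ^2/σ^4 + 2*ρ/σ^2) - μ/σ^2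

noncomputable def gam2 (μ σ ρ : ℝ) : ℝ := -Real.sqrt (μ^2/σ^4 + 2*ρ/σ^2) - μ/σ^2

/-- The classical optimal dividend boundary `b*_ρ`. -/
noncomputable def bstar (μ σ ρ : ℝ) : ℝ :=
  Real.log ((gam2 μ σ ρ)^2 / (gam1 μ σ ρ)^2) / (gam1 μ σ ρ - gam2 μ σ ρ)

/-- The classical value function `V_ρ`. -/
noncomputable def Vfun (μ σ ρ x : ℝ) : ℝ :=
  if x < bstar μ σ ρ then
    (Real.exp (gam1 μ σ ρ * x) - Real.exp (gam2 μ σ ρ * x)) /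
      (gam1 μ σ ρ * Real.exp (gam1 μ σ ρ * bstar μ σ ρ) -
        gam2 μ σ ρ * Real.exp (gam2 μ σ ρ * bstar μ σ ρ))
  else
    (Real.exp (gam1 μ σ ρ * bstar μ σ ρ) - Real.exp (gam2 μ σ ρ * bstar μ σ ρ)) /
      (gam1 μ σ ρ * Real.exp (gam1 μ σ ρ * bstar μ σ ρ) -
        gam2 μ σ ρ * Real.exp (gam2 μ σ ρ * bstar μ σ ρ)) + x - bstar μ σ ρ

/-- `δ(y) = e^{γ₁(r+q)y} − e^{γ₂(r+q)y}`. -/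
noncomputable def del (μ σ r q y : ℝ) : ℝ :=
  Real.exp (gam1 μ σ (r+q) * y) - Real.exp (gam2 μ σ (r+q) * y)

/-- `δ'(y)`. -/
noncomputable def delP (μ σ r q y : ℝ) : ℝ :=
  gam1 μ σ (r+q) * Real.exp (gam1 μ σ (r+q) * y) -
    gam2 μ σ (r+q) * Real.exp (gam2 μ σ (r+q) * y)

/-- `δ''(y)`. -/
noncomputable def delPP (μ σ r q y : ℝ) : ℝ :=
  (gam1 μ σ (r+q))^2 * Real.exp (gam1 μ σ (r+q) * y) -
    (gam2 μ σ (r+q))^2 * Real.exp (gam2 μ σ (r+q) * y)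

/-- `y_u := b*_{r+q} + μ/r − μ/(r+q)`. -/
noncomputable def yUpper (μ σ r q : ℝ) : ℝ := bstar μ σ (r+q) + μ/r - μ/(r+q)

/-- `Δ(y)`. -/
noncomputable def DeltaF (μ σ r q y : ℝ) : ℝ :=
  (1/(gam1 μ σ r - gam2 μ σ r)) *
    Real.log ((gam2 μ σ r)^2 * (delP μ σ r q y - gam1 μ σ r * del μ σ r q y) /
      ((gam1 μ σ r)^2 * (delP μ σ r q y - gam2 μ σ r * del μ σ r q y)))

/-- `b*(y) = y + Δ(y)`. -/
noncomputable def bstarY (μ σ r q y : ℝ) : ℝ := y + DeltaF μ σ r q y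

noncomputable def psiF (μ σ ρ x : ℝ) : ℝ := Real.exp (gam1 μ σ ρ * x)
noncomputable def phiF (μ σ ρ x : ℝ) : ℝ := Real.exp (gam2 μ σ ρ * x)
noncomputable def psiP (μ σ ρ x : ℝ) : ℝ := gam1 μ σ ρ * Real.exp (gam1 μ σ ρ * x)
noncomputable def phiP (μ σ ρ x : ℝ) : ℝ := gam2 μ σ ρ * Real.exp (gam2 μ σ ρ * x)

/-- `η(y;b) = ψ'_r(b)φ_r(y) − φ'_r(b)ψ_r(y)`. -/
noncomputable def etaF (μ σ r y b : ℝ) : ℝ :=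
  psiP μ σ r b * phiF μ σ r y - phiP μ σ r b * psiF μ σ r y

/-- `η'(y;b)` (derivative in `y`). -/
noncomputable def etaP (μ σ r y b : ℝ) : ℝ :=
  psiP μ σ r b * phiP μ σ r y - phiP μ σ r b * psiP μ σ r y

/-- `K₁(y)`. -/
noncomputable def K1 (μ σ r q y : ℝ) : ℝ :=
  (psiF μ σ r y * etaP μ σ r y (bstarY μ σ r q y) -
    psiP μ σ r y * etaF μ σ r y (bstarY μ σ r q y)) /
  (psiP μ σ r (bstarY μ σ r q y) *
    (del μ σ r q y * etaP μ σ r y (bstarY μ σ r q y) -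
      delP μ σ r q y * etaF μ σ r y (bstarY μ σ r q y)))

/-- `K₂(y) = −K₁(y)`. -/
noncomputable def K2 (μ σ r q y : ℝ) : ℝ := -K1 μ σ r q y

/-- `K₃(y)`. -/
noncomputable def K3 (μ σ r q y : ℝ) : ℝ :=
  (phiP μ σ r (bstarY μ σ r q y) *
      (del μ σ r q y * psiP μ σ r y - delP μ σ r q y * psiF μ σ r y) +
    del μ σ r q y * etaP μ σ r y (bstarY μ σ r q y) -
      delP μ σ r q y * etaF μ σ r y (bstarY μ σ r q y)) /
  (psiP μ σ r (bstarY μ σ r q y) *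
    (del μ σ r q y * etaP μ σ r y (bstarY μ σ r q y) -
      delP μ σ r q y * etaF μ σ r y (bstarY μ σ r q y)))

/-- `K₄(y)`. -/
noncomputable def K4 (μ σ r q y : ℝ) : ℝ :=
  (psiF μ σ r y * delP μ σ r q y - psiP μ σ r y * del μ σ r q y) /
  (del μ σ r q y * etaP μ σ r y (bstarY μ σ r q y) -
    delP μ σ r q y * etaF μ σ r y (bstarY μ σ r q y))

/-- The candidate value function `w(·;y)` in the subcritical regime. -/
noncomputable def wfun (μ σ r q y x : ℝ) : ℝ :=
  if x < y then
    K1 μ σ r q y * Real.exp (gam1 μ σ (r+q) * x) + K2 μ σ r q y * Real.exp (gam2 μ σ (r+q) * x)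
  else if x < bstarY μ σ r q y then
    K3 μ σ r q y * Real.exp (gam1 μ σ r * x) + K4 μ σ r q y * Real.exp (gam2 μ σ r * x)
  else
    K3 μ σ r q y * Real.exp (gam1 μ σ r * bstarY μ σ r q y) +
      K4 μ σ r q y * Real.exp (gam2 μ σ r * bstarY μ σ r q y) + x - bstarY μ σ r q y

/-- The function `f` characterising the critical level `y_l`. -/
noncomputable def fF (μ σ r q y : ℝ) : ℝ :=
  (-(gam1 μ σ r / gam2 μ σ r) * delP μ σ r q y + gam1 μ σ r * del μ σ r q y) *
    ((gam2 μ σ r)^2/(gam1 μ σ r)^2 *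
      ((delP μ σ r q y - gam1 μ σ r * del μ σ r q y) /
        (delP μ σ r q y - gam2 μ σ r * del μ σ r q y)))
      ^ (gam1 μ σ r / (gam1 μ σ r - gam2 μ σ r))
  - delP μ σ r q (bstar μ σ (r+q))

noncomputable def e1F (μ σ r q b : ℝ) : ℝ :=
  (phiF μ σ (r+q) b - phiP μ σ (r+q) b * Vfun μ σ (r+q) b) /
  (psiP μ σ (r+q) b * phiF μ σ (r+q) b - psiF μ σ (r+q) b * phiP μ σ (r+q) b)

noncomputable def e2F (μ σ r q b : ℝ) : ℝ :=
  (psiP μ σ (r+q) b * Vfun μ σ (r+q) b - psiF μ σ (r+q) b) /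
  (psiP μ σ (r+q) b * phiF μ σ (r+q) b - psiF μ σ (r+q) b * phiP μ σ (r+q) b)

noncomputable def e3F (μ σ r q b y : ℝ) : ℝ :=
  (e1F μ σ r q b * (phiF μ σ r y * psiP μ σ (r+q) y - phiP μ σ r y * psiF μ σ (r+q) y) +
    e2F μ σ r q b * (phiF μ σ r y * phiP μ σ (r+q) y - phiP μ σ r y * phiF μ σ (r+q) y)) /
  (psiP μ σ r y * phiF μ σ r y - psiF μ σ r y * phiP μ σ r y)

noncomputable def e4F (μ σ r q b y : ℝ) : ℝ :=
  (e1F μ σ r q b * (psiP μ σ r y * psiF μ σ (r+q) y - psiF μ σ r y * psiP μ σ (r+q) y) +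
    e2F μ σ r q b * (psiP μ σ r y * phiF μ σ (r+q) y - psiF μ σ r y * phiP μ σ (r+q) y)) /
  (psiP μ σ r y * phiF μ σ r y - psiF μ σ r y * phiP μ σ r y)

/-- The function `H(b,y)` from the critical regime. -/
noncomputable def Hfun (μ σ r q b y : ℝ) : ℝ :=
  (gam1 μ σ r - gam2 μ σ r) *
    (-gam2 μ σ r / gam1 μ σ r) ^ ((gam1 μ σ r + gam2 μ σ r)/(gam1 μ σ r - gam2 μ σ r)) *
    (e3F μ σ r q b y) ^ (-gam2 μ σ r/(gam1 μ σ r - gam2 μ σ r)) *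
    (-e4F μ σ r q b y) ^ (gam1 μ σ r/(gam1 μ σ r - gam2 μ σ r))

/-- `Λ(b,y) = −e₄(b,y)/e₃(b,y)`. -/
noncomputable def Lamfun (μ σ r q b y : ℝ) : ℝ := -e4F μ σ r q b y / e3F μ σ r q b y

/-- `L(y)`. -/
noncomputable def Lfun (μ σ r q y : ℝ) : ℝ :=
  (1/(gam1 μ σ r - gam2 μ σ r)) *
    Real.log ((gam2 μ σ r)^2/(gam1 μ σ r)^2 * Lamfun μ σ r q y y) - y

/-!
Write `g₁ = γ₁(r)`, `g₂ = γ₂(r)`, `W_g = δ' − g δ` and `Δ = Δ(y)`. The logarithm in `Δ` is chosen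
so that `g₁² W_{g₂} e^{g₁Δ} = g₂² W_{g₁} e^{g₂Δ}`; substituting `b*(y) = y + Δ` into `K₁` and
using this relation collapses `K₁` to `−g₂ / (g₁ e^{g₁Δ} W_{g₂})`, which is the closed form and is
positive.

Consequently `(log K₁)' = −g₁Δ' − W_{g₂}'/W_{g₂}`, and since `δ'' = (g₁ + g₂) δ' − γ₁γ₂(r+q) δ`
this equals `−(g₁g₂ − γ₁γ₂(r+q)) δ δ' / (W_{g₁} W_{g₂})`, where `g₁g₂ − γ₁γ₂(r+q) = 2q/σ² > 0`.

For the last claim, `K₁(y) δ(y) = Φ(−Δ)`, where `Φ = smoothFitSol g₁ g₂` solves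
`σ²/2 Φ'' + μ Φ' = r Φ` with `Φ'(0) = 1`, `Φ''(0) = 0`; hence `Φ(0) = μ/r` and `Φ < μ/r` on
`(−∞, 0)`. The function `δ` is convex beyond `b*_{r+q}`, where `δ = μ/(r+q) · δ'`. Comparing chords
with tangents over `[b*_{r+q}, y_u]`, whose length is `μ/r − μ/(r+q)`, gives first
`r δ(y_u) < μ δ'(y_u)`, i.e. `Δ(y_u) > 0`, so `K₁(y_u) δ(y_u) < μ/r`, and then
`K₁(y_u) δ'(b*_{r+q}) · μ/r < K₁(y_u) δ(y_u)`.
-/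

section Roots

variable {μ σ ρ ρ' : ℝ}

private lemma disc_nonneg (hρ : 0 ≤ ρ) : 0 ≤ μ^2/σ^4 + 2*ρ/σ^2 := by positivity

private lemma abs_lt_sqrt_disc (hσ : σ ≠ 0) (hρ : 0 < ρ) :
    |μ/σ^2| < Real.sqrt (μ^2/σ^4 + 2*ρ/σ^2) := by
  rw [← Real.sqrt_sq_eq_abs]
  refine Real.sqrt_lt_sqrt (sq_nonneg _) ?_
  have : 0 < 2*ρ/σ^2 := by positivity
  rw [div_pow, ← pow_mul]
  linarith

lemma gam1_pos (hσ : σ ≠ 0) (hρ : 0 < ρ) : 0 < gam1 μ σ ρ := by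
  have := abs_lt_sqrt_disc (μ := μ) hσ hρ
  rw [gam1]
  linarith [le_abs_self (μ/σ^2)]

lemma gam2_neg (hσ : σ ≠ 0) (hρ : 0 < ρ) : gam2 μ σ ρ < 0 := by
  have := abs_lt_sqrt_disc (μ := μ) hσ hρ
  rw [gam2]
  linarith [neg_abs_le (μ/σ^2)]

lemma gam1_add_gam2 : gam1 μ σ ρ + gam2 μ σ ρ = -2*μ/σ^2 := by
  rw [gam1, gam2]; ring

lemma gam1_mul_gam2 (hρ : 0 ≤ ρ) : gam1 μ σ ρ * gam2 μ σ ρ = -2*ρ/σ^2 := by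
  rw [gam1, gam2]
  linear_combination (-1 : ℝ) * Real.sq_sqrt (disc_nonneg (μ := μ) (σ := σ) hρ)

lemma gam1_lt_gam1 (hσ : σ ≠ 0) (hρ : 0 ≤ ρ) (h : ρ < ρ') : gam1 μ σ ρ < gam1 μ σ ρ' := by
  have : 2*ρ/σ^2 < 2*ρ'/σ^2 := by gcongr
  have := Real.sqrt_lt_sqrt (disc_nonneg (μ := μ) (σ := σ) hρ) (by linarith :
    μ^2/σ^4 + 2*ρ/σ^2 < μ^2/σ^4 + 2*ρ'/σ^2)
  rw [gam1, gam1]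
  linarith

lemma gam2_lt_gam2 (hσ : σ ≠ 0) (hρ : 0 ≤ ρ) (h : ρ < ρ') : gam2 μ σ ρ' < gam2 μ σ ρ := by
  have := gam1_lt_gam1 (μ := μ) hσ hρ h
  rw [gam1, gam1] at this
  rw [gam2, gam2]
  linarith

lemma exp_mul_bstar (hσ : σ ≠ 0) (hρ : 0 < ρ) :
    exp ((gam1 μ σ ρ - gam2 μ σ ρ) * bstar μ σ ρ) = gam2 μ σ ρ ^ 2 / gam1 μ σ ρ ^ 2 := by
  have h1 := gam1_pos (μ := μ) hσ hρ
  have h2 := gam2_neg (μ := μ) hσ hρ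
  rw [bstar, mul_div_cancel₀ _ (by linarith),
    exp_log (by have := h1.ne'; have := h2.ne; positivity)]

lemma bstar_pos (hμ : 0 < μ) (hσ : σ ≠ 0) (hρ : 0 < ρ) : 0 < bstar μ σ ρ := by
  have h1 := gam1_pos (μ := μ) hσ hρ
  have h2 := gam2_neg (μ := μ) hσ hρ
  have hsum : gam1 μ σ ρ + gam2 μ σ ρ < 0 := by
    rw [gam1_add_gam2, neg_mul, neg_div]; exact neg_neg_of_pos (by positivity)
  refine div_pos (log_pos ?_) (by linarith)
  rw [one_lt_div (pow_pos h1 2)]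
  nlinarith

end Roots

lemma hasDerivAt_exp_const_mul (k y : ℝ) :
    HasDerivAt (fun y => exp (k * y)) (k * exp (k * y)) y := by
  simpa [mul_comm] using ((hasDerivAt_id y).const_mul k).exp

noncomputable def smoothFitSol (g1 g2 t : ℝ) : ℝ :=
  (-(g2/g1) * exp (g1*t) + (g1/g2) * exp (g2*t)) / (g1 - g2)

lemma smoothFitSol_lt {g1 g2 t : ℝ} (hg1 : 0 < g1) (hg2 : g2 < 0) (ht : t < 0) :
    smoothFitSol g1 g2 t < (g1 + g2) / (g1 * g2) := by
  have h1 : -(g2/g1) * (exp (g1*t) - 1) < 0 :=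
    mul_neg_of_pos_of_neg (by rw [neg_pos]; exact div_neg_of_neg_of_pos hg2 hg1)
      (by rw [sub_neg]; exact exp_lt_one_iff.2 (mul_neg_of_pos_of_neg hg1 ht))
  have h2 : (g1/g2) * (exp (g2*t) - 1) < 0 :=
    mul_neg_of_neg_of_pos (div_neg_of_pos_of_neg hg1 hg2)
      (by rw [sub_pos]; exact one_lt_exp_iff.2 (mul_pos_of_neg_of_neg hg2 ht))
  have hg12 : 0 < g1 - g2 := by linarith
  have hval : (g1 + g2) / (g1 * g2) = (-(g2/g1) + g1/g2) / (g1 - g2) := by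
    field_simp [hg2.ne]; ring
  rw [smoothFitSol, hval]
  exact div_lt_div_of_pos_right (by linarith) hg12

noncomputable def delWron (μ σ r q g y : ℝ) : ℝ := delP μ σ r q y - g * del μ σ r q y

section

variable {μ σ r q : ℝ}

lemma hasDerivAt_del (y : ℝ) : HasDerivAt (del μ σ r q) (delP μ σ r q y) y :=
  (hasDerivAt_exp_const_mul _ y).sub (hasDerivAt_exp_const_mul _ y)

lemma hasDerivAt_delP (y : ℝ) : HasDerivAt (delP μ σ r q) (delPP μ σ r q y) y :=
  (((hasDerivAt_exp_const_mul _ y).const_mul _).sub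
    ((hasDerivAt_exp_const_mul _ y).const_mul _)).congr_deriv (by rw [delPP]; ring)

lemma delPP_eq (y : ℝ) :
    delPP μ σ r q y = (gam1 μ σ (r+q) + gam2 μ σ (r+q)) * delP μ σ r q y
      - gam1 μ σ (r+q) * gam2 μ σ (r+q) * del μ σ r q y := by
  rw [delPP, delP, del]; ring

lemma delP_pos (hσ : σ ≠ 0) (hrq : 0 < r + q) (y : ℝ) : 0 < delP μ σ r q y := by
  have := mul_pos (gam1_pos (μ := μ) hσ hrq) (exp_pos (gam1 μ σ (r+q) * y))
  have := mul_neg_of_neg_of_pos (gam2_neg (μ := μ) hσ hrq) (exp_pos (gam2 μ σ (r+q) * y))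
  rw [delP]; linarith

lemma del_pos (hσ : σ ≠ 0) (hrq : 0 < r + q) {y : ℝ} (hy : 0 < y) : 0 < del μ σ r q y := by
  have := (gam2_neg (μ := μ) hσ hrq).trans (gam1_pos (μ := μ) hσ hrq)
  rw [del, sub_pos, exp_lt_exp]
  exact mul_lt_mul_of_pos_right this hy

lemma delPP_pos (hσ : σ ≠ 0) (hrq : 0 < r + q) {x : ℝ} (hx : bstar μ σ (r+q) < x) :
    0 < delPP μ σ r q x := by
  set a := gam1 μ σ (r+q)
  set c := gam2 μ σ (r+q)
  have ha : 0 < a := gam1_pos hσ hrq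
  have hc : c < 0 := gam2_neg hσ hrq
  have hB := exp_mul_bstar (μ := μ) hσ hrq
  have hlt : exp ((a - c) * bstar μ σ (r+q)) < exp ((a - c) * x) :=
    exp_lt_exp.2 (mul_lt_mul_of_pos_left hx (by linarith))
  rw [hB, div_lt_iff₀ (by positivity), sub_mul, exp_sub,
    div_mul_eq_mul_div, lt_div_iff₀ (exp_pos _)] at hlt
  rw [delPP, sub_pos]
  linarith

lemma delP_strictMonoOn (hσ : σ ≠ 0) (hrq : 0 < r + q) :
    StrictMonoOn (delP μ σ r q) (Ici (bstar μ σ (r+q))) := by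
  refine strictMonoOn_of_deriv_pos (convex_Ici _)
    (fun x _ => (hasDerivAt_delP x).continuousAt.continuousWithinAt) fun x hx => ?_
  rw [interior_Ici] at hx
  rw [(hasDerivAt_delP x).deriv]
  exact delPP_pos hσ hrq hx

lemma del_bstar (hσ : σ ≠ 0) (hrq : 0 < r + q) :
    del μ σ r q (bstar μ σ (r+q)) = μ / (r + q) * delP μ σ r q (bstar μ σ (r+q)) := by
  have ha := gam1_pos (μ := μ) hσ hrq
  have hB := exp_mul_bstar (μ := μ) hσ hrq
  have hsum : gam1 μ σ (r+q) + gam2 μ σ (r+q) = -2*μ/σ^2 := gam1_add_gam2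
  have hprod := gam1_mul_gam2 (μ := μ) (σ := σ) hrq.le
  rw [delP, del]
  set a := gam1 μ σ (r+q)
  set c := gam2 μ σ (r+q)
  set B := bstar μ σ (r+q)
  have hexp : exp (a * B) = exp (c * B) * (c^2 / a^2) := by
    rw [← hB, ← exp_add]; congr 1; ring
  have hkey : (r + q) * (a + c) = μ * (a * c) := by
    rw [hsum, hprod]; field_simp
  rw [hexp]
  field_simp
  linear_combination (c - a) * hkey

lemma del_sub_mem_Ioo (hσ : σ ≠ 0) (hrq : 0 < r + q) {x y : ℝ}
    (hx : bstar μ σ (r+q) ≤ x) (hxy : x < y) :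
    del μ σ r q y - del μ σ r q x ∈ Ioo (delP μ σ r q x * (y - x)) (delP μ σ r q y * (y - x)) := by
  obtain ⟨ξ, hξ, hslope⟩ := exists_hasDerivAt_eq_slope (del μ σ r q) (delP μ σ r q) hxy
    (fun z _ => (hasDerivAt_del z).continuousAt.continuousWithinAt)
    (fun z _ => hasDerivAt_del z)
  have hyx : 0 < y - x := sub_pos.2 hxy
  rw [eq_div_iff hyx.ne'] at hslope
  have hmono := delP_strictMonoOn (μ := μ) (r := r) (q := q) hσ hrq
  have h1 := hmono hx (hx.trans hξ.1.le) hξ.1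
  have h2 := hmono (hx.trans hξ.1.le) (hx.trans hxy.le) hξ.2
  rw [← hslope]
  exact ⟨mul_lt_mul_of_pos_right h1 hyx, mul_lt_mul_of_pos_right h2 hyx⟩

lemma delWron_pos {g : ℝ} (hg : g ∈ Ioo (gam2 μ σ (r+q)) (gam1 μ σ (r+q))) (y : ℝ) :
    0 < delWron μ σ r q g y := by
  have h1 := mul_pos (sub_pos.2 hg.2) (exp_pos (gam1 μ σ (r+q) * y))
  have h2 := mul_pos (sub_pos.2 hg.1) (exp_pos (gam2 μ σ (r+q) * y))
  rw [delWron, delP, del]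
  linarith

lemma gam1_mem_Ioo (hσ : σ ≠ 0) (hr : 0 < r) (hq : 0 < q) :
    gam1 μ σ r ∈ Ioo (gam2 μ σ (r+q)) (gam1 μ σ (r+q)) :=
  ⟨(gam2_neg hσ (by linarith)).trans (gam1_pos hσ hr), gam1_lt_gam1 hσ hr.le (by linarith)⟩

lemma gam2_mem_Ioo (hσ : σ ≠ 0) (hr : 0 < r) (hq : 0 < q) :
    gam2 μ σ r ∈ Ioo (gam2 μ σ (r+q)) (gam1 μ σ (r+q)) :=
  ⟨gam2_lt_gam2 hσ hr.le (by linarith), (gam2_neg hσ hr).trans (gam1_pos hσ (by linarith))⟩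

lemma exp_mul_DeltaF (hσ : σ ≠ 0) (hr : 0 < r) (hq : 0 < q) (y : ℝ) :
    gam1 μ σ r ^ 2 * delWron μ σ r q (gam2 μ σ r) y * exp (gam1 μ σ r * DeltaF μ σ r q y) =
      gam2 μ σ r ^ 2 * delWron μ σ r q (gam1 μ σ r) y * exp (gam2 μ σ r * DeltaF μ σ r q y) := by
  have hW1 := delWron_pos (gam1_mem_Ioo (μ := μ) hσ hr hq) y
  have hW2 := delWron_pos (gam2_mem_Ioo (μ := μ) hσ hr hq) y
  have hg1 := gam1_pos (μ := μ) hσ hr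
  have hg2 := gam2_neg (μ := μ) hσ hr
  have hexp : exp ((gam1 μ σ r - gam2 μ σ r) * DeltaF μ σ r q y) =
      gam2 μ σ r ^ 2 * delWron μ σ r q (gam1 μ σ r) y /
        (gam1 μ σ r ^ 2 * delWron μ σ r q (gam2 μ σ r) y) := by
    rw [DeltaF, ← mul_assoc, mul_one_div_cancel (by linarith), one_mul,
      exp_log (by have := hg2.ne; positivity)]
    rfl
  rw [show gam1 μ σ r * DeltaF μ σ r q y =
    (gam1 μ σ r - gam2 μ σ r) * DeltaF μ σ r q y + gam2 μ σ r * DeltaF μ σ r q y by ring,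
    exp_add, hexp]
  field_simp

lemma K1_eq (hσ : σ ≠ 0) (hr : 0 < r) (hq : 0 < q) (y : ℝ) :
    K1 μ σ r q y = -gam2 μ σ r /
      (gam1 μ σ r * exp (gam1 μ σ r * DeltaF μ σ r q y) * delWron μ σ r q (gam2 μ σ r) y) := by
  have hfit := exp_mul_DeltaF (μ := μ) hσ hr hq y
  have hW1 := delWron_pos (gam1_mem_Ioo (μ := μ) hσ hr hq) y
  have hW2 := delWron_pos (gam2_mem_Ioo (μ := μ) hσ hr hq) y
  have hg1 := gam1_pos (μ := μ) hσ hr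
  have hg2 := gam2_neg (μ := μ) hσ hr
  have hE1 := exp_pos (gam1 μ σ r * DeltaF μ σ r q y)
  have hy1 := exp_pos (gam1 μ σ r * y)
  have hy2 := exp_pos (gam2 μ σ r * y)
  simp only [K1, etaP, etaF, psiF, psiP, phiF, phiP, bstarY, mul_add, exp_add]
  simp only [delWron] at hfit hW1 hW2 ⊢
  generalize gam1 μ σ r = g1 at *
  generalize gam2 μ σ r = g2 at *
  generalize exp (g1 * DeltaF μ σ r q y) = E1 at *
  generalize exp (g2 * DeltaF μ σ r q y) = E2 at *
  generalize exp (g1 * y) = e1 at *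
  generalize exp (g2 * y) = e2 at *
  generalize del μ σ r q y = d at *
  generalize delP μ σ r q y = d' at *
  have hden : g2 * E2 * (d' - g1 * d) - g1 * E1 * (d' - g2 * d) ≠ 0 := by
    have hpos : 0 < g1 * (g1 - g2) * E1 * (d' - g2 * d) := by
      have : 0 < g1 - g2 := by linarith
      positivity
    refine right_ne_zero_of_mul (a := g2) (ne_of_eq_of_ne ?_ hpos.ne')
    linear_combination -hfit
  rw [div_eq_div_iff (ne_of_eq_of_ne (by ring) (by positivity :
    g1 * e1 * E1 * (e1 * e2) * (g2 * E2 * (d' - g1 * d) - g1 * E1 * (d' - g2 * d)) ≠ 0))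
    (by positivity)]
  linear_combination (-g1 * e1^2 * e2 * E1) * hfit

lemma K1_pos (hσ : σ ≠ 0) (hr : 0 < r) (hq : 0 < q) (y : ℝ) : 0 < K1 μ σ r q y := by
  have hW2 := delWron_pos (gam2_mem_Ioo (μ := μ) hσ hr hq) y
  have hg1 := gam1_pos (μ := μ) hσ hr
  have hg2 : 0 < -gam2 μ σ r := neg_pos.2 (gam2_neg hσ hr)
  rw [K1_eq hσ hr hq]
  positivity

lemma K1_eq_rpow (hσ : σ ≠ 0) (hr : 0 < r) (hq : 0 < q) (y : ℝ) :
    K1 μ σ r q y =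
      (((gam2 μ σ r)^2/(gam1 μ σ r)^2 *
          ((delP μ σ r q y - gam1 μ σ r * del μ σ r q y) /
            (delP μ σ r q y - gam2 μ σ r * del μ σ r q y)))
          ^ (gam1 μ σ r/(gam1 μ σ r - gam2 μ σ r)) *
        (gam1 μ σ r/(-gam2 μ σ r) * delP μ σ r q y + gam1 μ σ r * del μ σ r q y))⁻¹ := by
  have hW1 := delWron_pos (gam1_mem_Ioo (μ := μ) hσ hr hq) y
  have hW2 := delWron_pos (gam2_mem_Ioo (μ := μ) hσ hr hq) y
  have hg1 := gam1_pos (μ := μ) hσ hr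
  have hg2 := gam2_neg (μ := μ) hσ hr
  have hexp : exp (gam1 μ σ r * DeltaF μ σ r q y) =
      ((gam2 μ σ r)^2/(gam1 μ σ r)^2 *
          ((delP μ σ r q y - gam1 μ σ r * del μ σ r q y) /
            (delP μ σ r q y - gam2 μ σ r * del μ σ r q y)))
          ^ (gam1 μ σ r/(gam1 μ σ r - gam2 μ σ r)) := by
    rw [rpow_def_of_pos (by rw [delWron] at hW1 hW2; have := hg2.ne; positivity),
      div_mul_div_comm, DeltaF]
    congr 1
    ring
  have hfac : gam1 μ σ r/(-gam2 μ σ r) * delP μ σ r q y + gam1 μ σ r * del μ σ r q y =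
      gam1 μ σ r/(-gam2 μ σ r) * delWron μ σ r q (gam2 μ σ r) y := by
    rw [delWron]; field_simp [hg2.ne]; ring
  rw [K1_eq hσ hr hq, ← hexp, hfac]
  field_simp [hg2.ne]

lemma K1_mul_del (hσ : σ ≠ 0) (hr : 0 < r) (hq : 0 < q) (y : ℝ) :
    K1 μ σ r q y * del μ σ r q y =
      smoothFitSol (gam1 μ σ r) (gam2 μ σ r) (-DeltaF μ σ r q y) := by
  have hfit := exp_mul_DeltaF (μ := μ) hσ hr hq y
  have hW1 := delWron_pos (gam1_mem_Ioo (μ := μ) hσ hr hq) y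
  have hW2 := delWron_pos (gam2_mem_Ioo (μ := μ) hσ hr hq) y
  have hg1 := gam1_pos (μ := μ) hσ hr
  have hg2 := gam2_neg (μ := μ) hσ hr
  have hE1 := exp_pos (gam1 μ σ r * DeltaF μ σ r q y)
  have hE2 := exp_pos (gam2 μ σ r * DeltaF μ σ r q y)
  rw [K1_eq hσ hr hq, smoothFitSol, mul_neg, mul_neg, exp_neg, exp_neg]
  simp only [delWron] at hfit hW1 hW2 ⊢
  generalize gam1 μ σ r = g1 at *
  generalize gam2 μ σ r = g2 at *
  generalize exp (g1 * DeltaF μ σ r q y) = E1 at *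
  generalize exp (g2 * DeltaF μ σ r q y) = E2 at *
  have hg12 : g1 - g2 ≠ 0 := by linarith
  field_simp [hg2.ne]
  linear_combination -hfit

lemma hasDerivAt_delWron (g y : ℝ) :
    HasDerivAt (delWron μ σ r q g) (delPP μ σ r q y - g * delP μ σ r q y) y :=
  (hasDerivAt_delP y).sub ((hasDerivAt_del y).const_mul g)

lemma hasDerivAt_DeltaF (hσ : σ ≠ 0) (hr : 0 < r) (hq : 0 < q) (y : ℝ) :
    HasDerivAt (DeltaF μ σ r q)
      (((delPP μ σ r q y - gam1 μ σ r * delP μ σ r q y) / delWron μ σ r q (gam1 μ σ r) y -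
        (delPP μ σ r q y - gam2 μ σ r * delP μ σ r q y) / delWron μ σ r q (gam2 μ σ r) y) /
        (gam1 μ σ r - gam2 μ σ r)) y := by
  have hW1 := delWron_pos (gam1_mem_Ioo (μ := μ) hσ hr hq) y
  have hW2 := delWron_pos (gam2_mem_Ioo (μ := μ) hσ hr hq) y
  have hg1 := gam1_pos (μ := μ) hσ hr
  have hg2 := gam2_neg (μ := μ) hσ hr
  have hg12 : gam1 μ σ r - gam2 μ σ r ≠ 0 := by linarith
  have h := ((((hasDerivAt_delWron (gam1 μ σ r) y).const_mul (gam2 μ σ r ^ 2)).div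
    ((hasDerivAt_delWron (gam2 μ σ r) y).const_mul (gam1 μ σ r ^ 2))
    (mul_pos (pow_pos hg1 2) hW2).ne').log
    (div_pos (mul_pos (sq_pos_of_neg hg2) hW1) (mul_pos (pow_pos hg1 2) hW2)).ne').const_mul
    (1 / (gam1 μ σ r - gam2 μ σ r))
  refine h.congr_deriv ?_
  rw [Pi.div_apply]
  field_simp [hg2.ne]

lemma K1_eq_fun (hσ : σ ≠ 0) (hr : 0 < r) (hq : 0 < q) :
    K1 μ σ r q = fun y => -gam2 μ σ r / gam1 μ σ r *
      exp (-(gam1 μ σ r * DeltaF μ σ r q y)) / delWron μ σ r q (gam2 μ σ r) y := by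
  funext y
  rw [K1_eq hσ hr hq, exp_neg]
  field_simp

lemma hasDerivAt_K1 (hσ : σ ≠ 0) (hr : 0 < r) (hq : 0 < q) (y : ℝ) :
    HasDerivAt (K1 μ σ r q)
      (-(K1 μ σ r q y * ((gam1 μ σ r * gam2 μ σ r - gam1 μ σ (r+q) * gam2 μ σ (r+q)) *
        del μ σ r q y * delP μ σ r q y /
          (delWron μ σ r q (gam1 μ σ r) y * delWron μ σ r q (gam2 μ σ r) y)))) y := by
  have hW1 := delWron_pos (gam1_mem_Ioo (μ := μ) hσ hr hq) y
  have hW2 := delWron_pos (gam2_mem_Ioo (μ := μ) hσ hr hq) y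
  have hg1 := gam1_pos (μ := μ) hσ hr
  have hg2 := gam2_neg (μ := μ) hσ hr
  have hg12 : gam1 μ σ r - gam2 μ σ r ≠ 0 := by linarith
  have hsum : gam1 μ σ (r+q) + gam2 μ σ (r+q) = gam1 μ σ r + gam2 μ σ r := by
    rw [gam1_add_gam2, gam1_add_gam2]
  have h := ((((hasDerivAt_DeltaF (μ := μ) hσ hr hq y).const_mul (gam1 μ σ r)).neg.exp).const_mul
    (-gam2 μ σ r / gam1 μ σ r)).div (hasDerivAt_delWron (gam2 μ σ r) y) hW2.ne'
  rw [K1_eq_fun hσ hr hq]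
  refine h.congr_deriv ?_
  rw [Pi.neg_apply, delPP_eq, hsum]
  simp only [delWron] at hW1 hW2 ⊢
  field_simp
  ring

lemma deriv_K1_neg (hσ : σ ≠ 0) (hr : 0 < r) (hq : 0 < q) {y : ℝ} (hy : 0 < y) :
    deriv (K1 μ σ r q) y < 0 := by
  have hW1 := delWron_pos (gam1_mem_Ioo (μ := μ) hσ hr hq) y
  have hW2 := delWron_pos (gam2_mem_Ioo (μ := μ) hσ hr hq) y
  have hgap : 0 < gam1 μ σ r * gam2 μ σ r - gam1 μ σ (r+q) * gam2 μ σ (r+q) := by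
    rw [gam1_mul_gam2 hr.le, gam1_mul_gam2 (by linarith), sub_pos]
    exact div_lt_div_of_pos_right (by linarith) (by positivity)
  have hd := del_pos (μ := μ) hσ (by linarith : 0 < r + q) hy
  have hd' := delP_pos (μ := μ) (r := r) (q := q) hσ (by linarith) y
  have hK := K1_pos (μ := μ) hσ hr hq y
  rw [(hasDerivAt_K1 hσ hr hq y).deriv, neg_lt_zero]
  positivity

lemma DeltaF_pos (hσ : σ ≠ 0) (hr : 0 < r) (hq : 0 < q) {y : ℝ}
    (hy : r * del μ σ r q y < μ * delP μ σ r q y) : 0 < DeltaF μ σ r q y := by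
  have hW2 := delWron_pos (gam2_mem_Ioo (μ := μ) hσ hr hq) y
  have hg1 := gam1_pos (μ := μ) hσ hr
  have hg2 := gam2_neg (μ := μ) hσ hr
  have hg12 : 0 < gam1 μ σ r - gam2 μ σ r := by linarith
  have hsum : gam1 μ σ r + gam2 μ σ r = -2*μ/σ^2 := gam1_add_gam2
  have hprod := gam1_mul_gam2 (μ := μ) (σ := σ) hr.le
  have hdiff : gam2 μ σ r ^ 2 * delWron μ σ r q (gam1 μ σ r) y -
      gam1 μ σ r ^ 2 * delWron μ σ r q (gam2 μ σ r) y =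
      (gam1 μ σ r - gam2 μ σ r) * (2 / σ^2) * (μ * delP μ σ r q y - r * del μ σ r q y) := by
    rw [delWron, delWron]
    linear_combination (-(gam1 μ σ r - gam2 μ σ r) * delP μ σ r q y) * hsum +
      ((gam1 μ σ r - gam2 μ σ r) * del μ σ r q y) * hprod
  have hlt : gam1 μ σ r ^ 2 * delWron μ σ r q (gam2 μ σ r) y <
      gam2 μ σ r ^ 2 * delWron μ σ r q (gam1 μ σ r) y := by
    have : 0 < (gam1 μ σ r - gam2 μ σ r) * (2 / σ^2) * (μ * delP μ σ r q y - r * del μ σ r q y) :=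
      mul_pos (by positivity) (by linarith)
    linarith
  refine mul_pos (by positivity) (log_pos ?_)
  rw [one_lt_div (by positivity)]
  exact hlt

lemma K1_mul_del_lt (hσ : σ ≠ 0) (hr : 0 < r) (hq : 0 < q) {y : ℝ}
    (hy : r * del μ σ r q y < μ * delP μ σ r q y) : K1 μ σ r q y * del μ σ r q y < μ / r := by
  have hg1 := gam1_pos (μ := μ) hσ hr
  have hg2 := gam2_neg (μ := μ) hσ hr
  have hval : (gam1 μ σ r + gam2 μ σ r) / (gam1 μ σ r * gam2 μ σ r) = μ / r := by
    rw [gam1_add_gam2, gam1_mul_gam2 hr.le]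
    field_simp
  rw [K1_mul_del hσ hr hq, ← hval]
  exact smoothFitSol_lt hg1 hg2 (neg_neg_of_pos (DeltaF_pos hσ hr hq hy))

lemma bstar_lt_yUpper (hμ : 0 < μ) (hr : 0 < r) (hq : 0 < q) :
    bstar μ σ (r+q) < yUpper μ σ r q := by
  have : μ / (r + q) < μ / r := div_lt_div_of_pos_left hμ hr (by linarith)
  rw [yUpper]
  linarith

lemma r_mul_del_yUpper_lt (hμ : 0 < μ) (hσ : σ ≠ 0) (hr : 0 < r) (hq : 0 < q) :
    r * del μ σ r q (yUpper μ σ r q) < μ * delP μ σ r q (yUpper μ σ r q) := by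
  have hrq : 0 < r + q := by linarith
  set B := bstar μ σ (r+q)
  set yu := yUpper μ σ r q
  have hByu : B < yu := bstar_lt_yUpper hμ hr hq
  have hconv := (del_sub_mem_Ioo (μ := μ) hσ hrq le_rfl hByu).2
  have hmono := delP_strictMonoOn (μ := μ) (r := r) (q := q) hσ hrq
    (mem_Ici.2 le_rfl) (mem_Ici.2 hByu.le) hByu
  have hlen : yu - B = μ / r - μ / (r + q) := by simp only [yu, yUpper, B]; ring
  have hB := del_bstar (μ := μ) (r := r) (q := q) hσ hrq
  have hrt : 0 < r * (μ / (r + q)) := by positivity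
  calc r * del μ σ r q yu
      = r * (del μ σ r q yu - del μ σ r q B) + r * (μ / (r + q)) * delP μ σ r q B := by
        rw [hB]; ring
    _ < r * (delP μ σ r q yu * (yu - B)) + r * (μ / (r + q)) * delP μ σ r q yu :=
        add_lt_add (mul_lt_mul_of_pos_left hconv hr) (mul_lt_mul_of_pos_left hmono hrt)
    _ = μ * delP μ σ r q yu := by
        rw [hlen]; field_simp; ring

lemma K1_yUpper_mul_delP_bstar_lt_one (hμ : 0 < μ) (hσ : σ ≠ 0) (hr : 0 < r) (hq : 0 < q) :
    K1 μ σ r q (yUpper μ σ r q) * delP μ σ r q (bstar μ σ (r+q)) < 1 := by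
  have hrq : 0 < r + q := by linarith
  set B := bstar μ σ (r+q)
  set yu := yUpper μ σ r q
  have hK := K1_pos (μ := μ) hσ hr hq yu
  have hconv := (del_sub_mem_Ioo (μ := μ) hσ hrq le_rfl (bstar_lt_yUpper hμ hr hq)).1
  have hB := del_bstar (μ := μ) (r := r) (q := q) hσ hrq
  have hlen : yu - B = μ / r - μ / (r + q) := by simp only [yu, yUpper, B]; ring
  have hval := K1_mul_del_lt hσ hr hq (r_mul_del_yUpper_lt hμ hσ hr hq)
  have hlt : K1 μ σ r q yu * delP μ σ r q B * (μ / r) < 1 * (μ / r) :=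
    calc K1 μ σ r q yu * delP μ σ r q B * (μ / r)
        = K1 μ σ r q yu * (del μ σ r q B + delP μ σ r q B * (yu - B)) := by
          rw [hB, hlen]; ring
      _ < K1 μ σ r q yu * del μ σ r q yu := by
          gcongr; linarith
      _ < 1 * (μ / r) := by rwa [one_mul]
  exact lt_of_mul_lt_mul_right hlt (by positivity)

end

/-- closed form of `K₁(y)`, positivity for `y > 0`, `K₁' < 0` on
`(b*_{r+q}, y_u]`, and `K₁(y_u)δ'(b*_{r+q}) < 1`. -/
theorem stmt15 (μ σ r q : ℝ) (hμ : 0 < μ) (hσ : 0 < σ) (hr : 0 < r) (hq : 0 < q) :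
    (∀ y, 0 < y →
      K1 μ σ r q y =
        (((gam2 μ σ r)^2/(gam1 μ σ r)^2 *
            ((delP μ σ r q y - gam1 μ σ r * del μ σ r q y) /
              (delP μ σ r q y - gam2 μ σ r * del μ σ r q y)))
            ^ (gam1 μ σ r/(gam1 μ σ r - gam2 μ σ r)) *
          (gam1 μ σ r/(-gam2 μ σ r) * delP μ σ r q y + gam1 μ σ r * del μ σ r q y))⁻¹ ∧
      0 < K1 μ σ r q y) ∧
    (∀ y ∈ Set.Ioc (bstar μ σ (r+q)) (yUpper μ σ r q), deriv (K1 μ σ r q) y < 0) ∧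
    K1 μ σ r q (yUpper μ σ r q) * delP μ σ r q (bstar μ σ (r+q)) < 1 := by
  have hσ' := hσ.ne'
  refine ⟨fun y _ => ⟨K1_eq_rpow hσ' hr hq y, K1_pos hσ' hr hq y⟩, fun y hy => ?_,
    K1_yUpper_mul_delP_bstar_lt_one hμ hσ' hr hq⟩
  exact deriv_K1_neg hσ' hr hq ((bstar_pos hμ hσ' (by linarith)).trans hy.1)
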